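/- Global asymptotic stability of the leaky-integrator ESN: let γ ∈ (0, 1], let W^res be an N×N real matrix with ℓ²-operator norm ‖W^res‖ₒₚ < 1, let W^in be an N×D real matrix, and let u : ℕ → ℝ^D be any input sequence. If x, x̃ : ℕ → ℝ^N both satisfy x(t+1) = (1 − γ) x(t) + γ tanh.(W^res x(t) + W^in u(t+1)) for all t ∈ ℕ, then for all t, ‖x(t) − x̃(t)‖₂ ≤ ((1 − γ) + γ ‖W^res‖ₒₚ)^t · ‖x(0) − x̃(0)‖₂, and hence ‖x(t) − x̃(t)‖₂ → 0 as t → ∞. -/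

import Mathlib

open Filter Topology

/-- Componentwise hyperbolic tangent on Euclidean space. -/
noncomputable def tanhVec {n : ℕ} (v : EuclideanSpace ℝ (Fin n)) : EuclideanSpace ℝ (Fin n) :=
  WithLp.toLp 2 (fun i => Real.tanh (v i))

/-- The action `x ↦ W x` of a matrix on Euclidean space (equal to `Matrix.mulVec`). -/
noncomputable def mulVecE {m n : ℕ} (W : Matrix (Fin m) (Fin n) ℝ)
    (x : EuclideanSpace ℝ (Fin n)) : EuclideanSpace ℝ (Fin m) :=
  Matrix.toEuclideanLin W x

/-- The ℓ²-operator norm of a matrix (its largest singular value). -/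
noncomputable def opNorm {m n : ℕ} (W : Matrix (Fin m) (Fin n) ℝ) : ℝ :=
  ‖LinearMap.toContinuousLinearMap (Matrix.toEuclideanLin W)‖

/-!
The difference of two trajectories contracts by the factor `(1 - γ) + γ ‖W^res‖` at every step:
the leak term contributes `1 - γ`, and the update term contributes `γ` times the Lipschitz
constant of `x ↦ tanh.(W^res x + b)`, which is at most `‖W^res‖` because `tanh' = 1 / cosh² ≤ 1`.
Iterating gives the geometric bound, and the factor is `< 1` since `γ > 0` and `‖W^res‖ < 1`.
-/

theorem Real.hasDerivAt_tanh (x : ℝ) : HasDerivAt Real.tanh (Real.cosh x ^ 2)⁻¹ x := by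
  have h := (Real.hasDerivAt_sinh x).div (Real.hasDerivAt_cosh x) (Real.cosh_pos x).ne'
  rw [show Real.sinh / Real.cosh = Real.tanh from
    funext fun y => (Real.tanh_eq_sinh_div_cosh y).symm] at h
  refine h.congr_deriv ?_
  rw [← sq, ← sq, Real.cosh_sq_sub_sinh_sq, one_div]

theorem Real.lipschitzWith_tanh : LipschitzWith 1 Real.tanh := by
  refine lipschitzWith_of_nnnorm_deriv_le (fun x => (Real.hasDerivAt_tanh x).differentiableAt)
    fun x => ?_
  rw [(Real.hasDerivAt_tanh x).deriv, ← NNReal.coe_le_coe, coe_nnnorm, NNReal.coe_one,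
    Real.norm_eq_abs, abs_inv, abs_sq]
  exact inv_le_one_of_one_le₀ (one_le_pow₀ (Real.one_le_cosh x))

theorem LipschitzWith.euclideanSpace_map {ι : Type*} [Fintype ι] {K : NNReal} {f : ℝ → ℝ}
    (hf : LipschitzWith K f) :
    LipschitzWith K fun v : EuclideanSpace ℝ ι => WithLp.toLp 2 fun i => f (v i) := by
  refine LipschitzWith.of_dist_le_mul fun a b => ?_
  rw [EuclideanSpace.dist_eq, EuclideanSpace.dist_eq, ← Real.sqrt_sq K.coe_nonneg,
    ← Real.sqrt_mul (sq_nonneg _), Finset.mul_sum]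
  refine Real.sqrt_le_sqrt (Finset.sum_le_sum fun i _ => ?_)
  rw [← mul_pow]
  exact pow_le_pow_left₀ dist_nonneg (hf.dist_le_mul (a i) (b i)) 2

theorem lipschitzWith_tanhVec (n : ℕ) : LipschitzWith 1 (tanhVec (n := n)) :=
  Real.lipschitzWith_tanh.euclideanSpace_map

theorem norm_mulVecE_le {m n : ℕ} (W : Matrix (Fin m) (Fin n) ℝ) (v : EuclideanSpace ℝ (Fin n)) :
    ‖mulVecE W v‖ ≤ opNorm W * ‖v‖ :=
  (LinearMap.toContinuousLinearMap (Matrix.toEuclideanLin W)).le_opNorm v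

theorem norm_tanhVec_mulVecE_add_sub_le {m n : ℕ} (W : Matrix (Fin m) (Fin n) ℝ)
    (c : EuclideanSpace ℝ (Fin m)) (a b : EuclideanSpace ℝ (Fin n)) :
    ‖tanhVec (mulVecE W a + c) - tanhVec (mulVecE W b + c)‖ ≤ opNorm W * ‖a - b‖ :=
  calc ‖tanhVec (mulVecE W a + c) - tanhVec (mulVecE W b + c)‖
      ≤ ‖(mulVecE W a + c) - (mulVecE W b + c)‖ := by
        simpa using (lipschitzWith_tanhVec m).norm_sub_le (mulVecE W a + c) (mulVecE W b + c)
    _ = ‖mulVecE W (a - b)‖ := by rw [add_sub_add_right_eq_sub, mulVecE, mulVecE, mulVecE, map_sub]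
    _ ≤ opNorm W * ‖a - b‖ := norm_mulVecE_le W (a - b)

theorem norm_leaky_update_sub_le {E : Type*} [SeminormedAddCommGroup E] [NormedSpace ℝ E]
    {γ L : ℝ} (hγ0 : 0 ≤ γ) (hγ1 : γ ≤ 1) {F : E → E} (hF : ∀ a b, ‖F a - F b‖ ≤ L * ‖a - b‖)
    (a b : E) :
    ‖(1 - γ) • a + γ • F a - ((1 - γ) • b + γ • F b)‖ ≤ ((1 - γ) + γ * L) * ‖a - b‖ :=
  calc ‖(1 - γ) • a + γ • F a - ((1 - γ) • b + γ • F b)‖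
      = ‖(1 - γ) • (a - b) + γ • (F a - F b)‖ := by
        rw [smul_sub, smul_sub, add_sub_add_comm]
    _ ≤ (1 - γ) * ‖a - b‖ + γ * ‖F a - F b‖ := by
        refine (norm_add_le _ _).trans_eq ?_
        rw [norm_smul, norm_smul, Real.norm_of_nonneg (sub_nonneg.2 hγ1),
          Real.norm_of_nonneg hγ0]
    _ ≤ (1 - γ) * ‖a - b‖ + γ * (L * ‖a - b‖) := by gcongr; exact hF a b
    _ = ((1 - γ) + γ * L) * ‖a - b‖ := by ring

/-- Global asymptotic stability of the leaky-integrator ESN. -/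
theorem leaky_esn_stability (N D : ℕ) (γ : ℝ) (hγ0 : 0 < γ) (hγ1 : γ ≤ 1)
    (Wres : Matrix (Fin N) (Fin N) ℝ) (Win : Matrix (Fin N) (Fin D) ℝ)
    (hW : opNorm Wres < 1)
    (u : ℕ → EuclideanSpace ℝ (Fin D))
    (x x' : ℕ → EuclideanSpace ℝ (Fin N))
    (hx : ∀ t, x (t + 1) =
      (1 - γ) • x t + γ • tanhVec (mulVecE Wres (x t) + mulVecE Win (u (t + 1))))
    (hx' : ∀ t, x' (t + 1) =
      (1 - γ) • x' t + γ • tanhVec (mulVecE Wres (x' t) + mulVecE Win (u (t + 1)))) :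
    (∀ t : ℕ, ‖x t - x' t‖ ≤ ((1 - γ) + γ * opNorm Wres) ^ t * ‖x 0 - x' 0‖) ∧
    Tendsto (fun t : ℕ => ‖x t - x' t‖) atTop (𝓝 0) := by
  set c := (1 - γ) + γ * opNorm Wres
  have hW0 : 0 ≤ opNorm Wres := norm_nonneg _
  have hc0 : 0 ≤ c := by nlinarith
  have hc1 : c < 1 := by nlinarith
  have step (t : ℕ) : ‖x (t + 1) - x' (t + 1)‖ ≤ c * ‖x t - x' t‖ := by
    rw [hx t, hx' t]
    exact norm_leaky_update_sub_le hγ0.le hγ1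
      (norm_tanhVec_mulVecE_add_sub_le Wres (mulVecE Win (u (t + 1)))) (x t) (x' t)
  have bound (t : ℕ) : ‖x t - x' t‖ ≤ c ^ t * ‖x 0 - x' 0‖ :=
    le_geom (u := fun t => ‖x t - x' t‖) hc0 t fun k _ => step k
  refine ⟨bound, squeeze_zero (fun _ => norm_nonneg _) bound ?_⟩
  simpa using (tendsto_pow_atTop_nhds_zero_of_lt_one hc0 hc1).mul_const ‖x 0 - x' 0‖
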